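/- Let n ≥ 1, 0 < α < n, and let μ be a Borel measure on ℝⁿ with M_α μ bounded: M_α μ(x) ≤ A for all x. Let a ∈ L^∞(ℝⁿ) be supported in a ball B = B_R(x₀) with ∫_B a dx = 0. Then the global part of the Riesz potential satisfies ∫_{(3B)^c} |I_α a(x)| dμ(x) ≤ C(n,α) ∫_B |a(y)| M_α μ(y) dy, where I_α a(x) = γ(α)^{-1} ∫ a(y) |x−y|^{α−n} dy. -/

import Mathlib

open MeasureTheory
open scoped ENNReal

/-- The fractional maximal function `M_α μ(x) = sup_{r>0} r^α μ(B_r(x))/|B_r(x)|`. -/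
noncomputable def fracMax (n : ℕ) (α : ℝ) (μ : Measure (EuclideanSpace ℝ (Fin n)))
    (x : EuclideanSpace ℝ (Fin n)) : ℝ≥0∞ :=
  ⨆ (r : ℝ) (_ : 0 < r),
    ENNReal.ofReal (r ^ α) * μ (Metric.ball x r) / volume (Metric.ball x r)

/-- The normalization constant `γ(α) = 2^α π^{n/2} Γ(α/2) / Γ((n-α)/2)` of the Riesz
potential. -/
noncomputable def rieszGamma (n : ℕ) (α : ℝ) : ℝ :=
  2 ^ α * Real.pi ^ ((n : ℝ) / 2) * Real.Gamma (α / 2) / Real.Gamma (((n : ℝ) - α) / 2)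

/-- The Riesz potential `I_α a(x) = γ(α)⁻¹ ∫ a(y) |x-y|^{α-n} dy`. -/
noncomputable def rieszPot (n : ℕ) (α : ℝ) (a : EuclideanSpace ℝ (Fin n) → ℝ)
    (x : EuclideanSpace ℝ (Fin n)) : ℝ :=
  (rieszGamma n α)⁻¹ * ∫ y, a y * dist x y ^ (α - (n : ℝ))

/-!
Since `∫ a = 0`, one may subtract the kernel at the centre:
`I_α a(x) = γ(α)⁻¹ ∫ a(y) (|x - y|^(α-n) - |x - x₀|^(α-n)) dy`, and for `|x - x₀| ≥ 3R` the mean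
value theorem bounds the bracket by `(n - α) (2/3)^(α-n-1) R |x - x₀|^(α-n-1)`. It remains to
bound `R ∫_{(3B)ᶜ} |x - x₀|^(α-n-1) dμ(x)` by `C M_α μ(y)` for every `y ∈ B`: on the dyadic annuli
`3R 2^k ≤ |x - x₀| < 3R 2^(k+1)` the definition of `M_α μ(y)` gives
`μ(B(x₀, r)) ≤ μ(B(y, 4r/3)) ≲ M_α μ(y) r^(n-α)`, and the annuli contribute a geometric series of
ratio `1/2`. Multiplying by `|a(y)|` and integrating over `B` gives the estimate.
-/

open Metric

theorem abs_rpow_sub_rpow_le {p m u v : ℝ} (hp : p ≤ 1) (hm : 0 < m) (hu : m ≤ u) (hv : m ≤ v) :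
    |u ^ p - v ^ p| ≤ |p| * m ^ (p - 1) * |u - v| := by
  have hderiv : ∀ t ∈ Set.Ici m, HasDerivWithinAt (· ^ p) (p * t ^ (p - 1)) (Set.Ici m) t :=
    fun t ht => (Real.hasDerivAt_rpow_const (Or.inl (hm.trans_le ht).ne')).hasDerivWithinAt
  have hbound : ∀ t ∈ Set.Ici m, ‖p * t ^ (p - 1)‖ ≤ |p| * m ^ (p - 1) := fun t ht => by
    rw [norm_mul, Real.norm_eq_abs, Real.norm_of_nonneg (Real.rpow_nonneg (hm.le.trans ht) _)]
    exact mul_le_mul_of_nonneg_left (Real.rpow_le_rpow_of_nonpos hm ht (by linarith)) (abs_nonneg p)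
  simpa only [Real.norm_eq_abs] using
    (convex_Ici m).norm_image_sub_le_of_norm_hasDerivWithin_le hderiv hbound hv hu

theorem abs_dist_rpow_sub_dist_rpow_le {X : Type*} [PseudoMetricSpace X] {x y x₀ : X} {s R : ℝ}
    (hs : s ≤ 1) (hy : dist y x₀ < R) (hx : 3 * R ≤ dist x x₀) :
    |dist x y ^ s - dist x x₀ ^ s| ≤ |s| * (2 / 3) ^ (s - 1) * R * dist x x₀ ^ (s - 1) := by
  have hR : 0 < R := dist_nonneg.trans_lt hy
  have hdiff : |dist x y - dist x x₀| ≤ R := by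
    rw [dist_comm x y, dist_comm x x₀]
    exact (abs_dist_sub_le y x₀ x).trans hy.le
  have hm : 0 < 2 / 3 * dist x x₀ := by linarith
  have hxy : 2 / 3 * dist x x₀ ≤ dist x y := by
    linarith [abs_le.1 hdiff]
  calc |dist x y ^ s - dist x x₀ ^ s|
      ≤ |s| * (2 / 3 * dist x x₀) ^ (s - 1) * |dist x y - dist x x₀| :=
        abs_rpow_sub_rpow_le hs hm hxy (by linarith)
    _ ≤ |s| * (2 / 3 * dist x x₀) ^ (s - 1) * R := by gcongr
    _ = |s| * (2 / 3) ^ (s - 1) * R * dist x x₀ ^ (s - 1) := by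
        rw [Real.mul_rpow (by norm_num) dist_nonneg]; ring

theorem abs_integral_mul_le_of_integral_eq_zero {X : Type*} [MeasurableSpace X] {μ : Measure X}
    {a k : X → ℝ} {s : Set X} {c K : ℝ} (ha : Integrable a μ) (hk : AEStronglyMeasurable k μ)
    (h0 : ∫ y, a y ∂μ = 0) (hs : ∀ y ∉ s, a y = 0) (hK : ∀ y ∈ s, |k y - c| ≤ K) :
    |∫ y, a y * k y ∂μ| ≤ (∫ y, |a y| ∂μ) * K := by
  have hbound : ∀ y, ‖a y * (k y - c)‖ ≤ |a y| * K := fun y => by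
    by_cases hy : y ∈ s
    · rw [Real.norm_eq_abs, abs_mul]
      exact mul_le_mul_of_nonneg_left (hK y hy) (abs_nonneg _)
    · simp [hs y hy]
  have hint : Integrable (fun y => a y * (k y - c)) μ :=
    (ha.abs.mul_const K).mono' (ha.aestronglyMeasurable.mul (hk.sub aestronglyMeasurable_const))
      (ae_of_all _ hbound)
  have hcancel : ∫ y, a y * k y ∂μ = ∫ y, a y * (k y - c) ∂μ := by
    have hsplit : (fun y => a y * k y) = fun y => a y * (k y - c) + c * a y := by
      ext y; ring
    rw [hsplit, integral_add hint (ha.const_mul c), integral_const_mul, h0, mul_zero, add_zero]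
  rw [hcancel, ← integral_mul_const, ← Real.norm_eq_abs]
  exact norm_integral_le_of_norm_le (ha.abs.mul_const K) (ae_of_all _ hbound)

theorem compl_ball_subset_iUnion_annulus {X : Type*} [PseudoMetricSpace X] (x₀ : X) {ρ : ℝ}
    (hρ : 0 < ρ) : (ball x₀ ρ)ᶜ ⊆ ⋃ k : ℕ, ball x₀ (ρ * 2 ^ (k + 1)) \ ball x₀ (ρ * 2 ^ k) := by
  intro x hx
  have hx' : 1 ≤ dist x x₀ / ρ := (one_le_div hρ).2 (by simpa using hx)
  obtain ⟨k, hk, hk'⟩ := exists_nat_pow_near hx' one_lt_two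
  refine Set.mem_iUnion.2 ⟨k, ?_, ?_⟩
  · rw [mem_ball, mul_comm]; exact (div_lt_iff₀ hρ).1 hk'
  · rw [mem_ball, not_lt, mul_comm]; exact (le_div_iff₀ hρ).1 hk

theorem rpow_mul_two_pow_mul_rpow_mul_two_pow_succ {ρ : ℝ} (hρ : 0 < ρ) (p q : ℝ) (k : ℕ) :
    (ρ * 2 ^ k) ^ p * (ρ * 2 ^ (k + 1)) ^ q = 2 ^ q * ρ ^ (p + q) * (2 ^ (p + q)) ^ k := by
  rw [Real.mul_rpow hρ.le (by positivity), Real.mul_rpow hρ.le (by positivity),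
    ← Real.rpow_natCast, ← Real.rpow_natCast 2 (k + 1), ← Real.rpow_natCast (2 ^ (p + q)),
    ← Real.rpow_mul zero_le_two, ← Real.rpow_mul zero_le_two, ← Real.rpow_mul zero_le_two,
    Real.rpow_add hρ]
  have h2 : (2 : ℝ) ^ ((k : ℝ) * p) * 2 ^ (((k + 1 : ℕ) : ℝ) * q) =
      2 ^ q * 2 ^ ((p + q) * k) := by
    rw [← Real.rpow_add two_pos, ← Real.rpow_add two_pos]; push_cast; ring_nf
  linear_combination ρ ^ p * ρ ^ q * h2

/-- Summing over the dyadic annuli `ρ 2 ^ k ≤ dist x x₀ < ρ 2 ^ (k + 1)` gives a geometric series of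
ratio `2 ^ (p + q)`. -/
theorem setLIntegral_compl_ball_rpow_le {X : Type*} [PseudoMetricSpace X] [MeasurableSpace X]
    (μ : Measure X) (x₀ : X) {ρ p q : ℝ} {D : ℝ≥0∞} (hρ : 0 < ρ) (hp : p ≤ 0)
    (hμ : ∀ r, ρ ≤ r → μ (ball x₀ r) ≤ D * ENNReal.ofReal (r ^ q)) :
    ∫⁻ x in (ball x₀ ρ)ᶜ, ENNReal.ofReal (dist x x₀ ^ p) ∂μ ≤
      ENNReal.ofReal (2 ^ q * ρ ^ (p + q)) * (1 - ENNReal.ofReal (2 ^ (p + q)))⁻¹ * D := by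
  set A : ℕ → Set X := fun k => ball x₀ (ρ * 2 ^ (k + 1)) \ ball x₀ (ρ * 2 ^ k)
  have hannulus : ∀ k, ∫⁻ x in A k, ENNReal.ofReal (dist x x₀ ^ p) ∂μ ≤
      ENNReal.ofReal (2 ^ q * ρ ^ (p + q)) * ENNReal.ofReal (2 ^ (p + q)) ^ k * D := by
    intro k
    have hρk : 0 < ρ * 2 ^ k := by positivity
    calc ∫⁻ x in A k, ENNReal.ofReal (dist x x₀ ^ p) ∂μ
        ≤ ∫⁻ _ in A k, ENNReal.ofReal ((ρ * 2 ^ k) ^ p) ∂μ :=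
          setLIntegral_mono measurable_const fun x hx =>
            ENNReal.ofReal_le_ofReal (Real.rpow_le_rpow_of_nonpos hρk (not_lt.1 hx.2) hp)
      _ ≤ ENNReal.ofReal ((ρ * 2 ^ k) ^ p) * (D * ENNReal.ofReal ((ρ * 2 ^ (k + 1)) ^ q)) := by
          rw [setLIntegral_const]
          gcongr
          exact (measure_mono Set.sdiff_subset).trans
            (hμ _ (le_mul_of_one_le_right hρ.le (one_le_pow₀ one_le_two)))
      _ = ENNReal.ofReal (2 ^ q * ρ ^ (p + q)) * ENNReal.ofReal (2 ^ (p + q)) ^ k * D := by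
          rw [mul_left_comm, ← ENNReal.ofReal_mul (by positivity),
            rpow_mul_two_pow_mul_rpow_mul_two_pow_succ hρ, ENNReal.ofReal_mul (by positivity),
            ENNReal.ofReal_pow (by positivity), mul_comm D]
  calc ∫⁻ x in (ball x₀ ρ)ᶜ, ENNReal.ofReal (dist x x₀ ^ p) ∂μ
      ≤ ∫⁻ x in ⋃ k, A k, ENNReal.ofReal (dist x x₀ ^ p) ∂μ :=
        lintegral_mono_set (compl_ball_subset_iUnion_annulus x₀ hρ)
    _ ≤ ∑' k, ∫⁻ x in A k, ENNReal.ofReal (dist x x₀ ^ p) ∂μ := lintegral_iUnion_le _ _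
    _ ≤ ∑' k, ENNReal.ofReal (2 ^ q * ρ ^ (p + q)) * ENNReal.ofReal (2 ^ (p + q)) ^ k * D :=
        ENNReal.tsum_le_tsum hannulus
    _ = _ := by rw [ENNReal.tsum_mul_right, ENNReal.tsum_mul_left, ENNReal.tsum_geometric]

theorem integrable_of_abs_le_of_forall_notMem_eq_zero {X : Type*} [MeasurableSpace X]
    {μ : Measure X} {s : Set X} {a : X → ℝ} {M : ℝ} (hs : μ s ≠ ⊤)
    (ha : AEStronglyMeasurable a μ) (hM : ∀ x, |a x| ≤ M) (h0 : ∀ x ∉ s, a x = 0) :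
    Integrable a μ :=
  (Measure.integrableOn_of_bounded hs ha
    (ae_of_all _ fun x => (Real.norm_eq_abs _).trans_le (hM x))).integrable_of_forall_notMem_eq_zero
    h0

theorem ofReal_integral_abs_eq_setLIntegral {X : Type*} [MeasurableSpace X] {μ : Measure X}
    {s : Set X} {a : X → ℝ} (ha : Integrable a μ) (h0 : ∀ x ∉ s, a x = 0) :
    ENNReal.ofReal (∫ y, |a y| ∂μ) = ∫⁻ y in s, (‖a y‖₊ : ℝ≥0∞) ∂μ := by
  have h := ofReal_integral_norm_eq_lintegral_enorm ha
  simp only [Real.norm_eq_abs, enorm_eq_nnnorm] at h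
  rw [h, setLIntegral_eq_of_support_subset]
  exact Function.support_subset_iff'.2 fun y hy => by simp [h0 y hy]

theorem setLIntegral_mul_le_const_mul_setLIntegral {X : Type*} [MeasurableSpace X]
    {μ : Measure X} {s : Set X} {f g : X → ℝ≥0∞} {t C : ℝ≥0∞} (hs : MeasurableSet s)
    (hf : AEMeasurable f (μ.restrict s)) (hC : C ≠ ⊤) (h : ∀ y ∈ s, t ≤ C * g y) :
    (∫⁻ y in s, f y ∂μ) * t ≤ C * ∫⁻ y in s, f y * g y ∂μ := by
  rw [← lintegral_mul_const'' _ hf, ← lintegral_const_mul' _ _ hC]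
  refine setLIntegral_mono' hs fun y hy => ?_
  rw [mul_left_comm]
  gcongr
  exact h y hy

theorem rieszGamma_pos {n : ℕ} {α : ℝ} (hα : 0 < α) (hαn : α < n) : 0 < rieszGamma n α := by
  unfold rieszGamma
  have := Real.Gamma_pos_of_pos (half_pos hα)
  have := Real.Gamma_pos_of_pos (half_pos (sub_pos.2 hαn))
  positivity

theorem abs_rieszPot_le {n : ℕ} {α : ℝ} (hαn : α < n) {a : EuclideanSpace ℝ (Fin n) → ℝ}
    {x₀ x : EuclideanSpace ℝ (Fin n)} {R : ℝ} (ha : Integrable a)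
    (hsupp : ∀ y ∉ ball x₀ R, a y = 0) (h0 : ∫ y, a y = 0) (hx : 3 * R ≤ dist x x₀) :
    |rieszPot n α a x| ≤ |rieszGamma n α|⁻¹ * ((∫ y, |a y|) *
      ((n - α) * (2 / 3) ^ (α - n - 1) * R * dist x x₀ ^ (α - n - 1))) := by
  rw [rieszPot, abs_mul, abs_inv]
  gcongr
  refine abs_integral_mul_le_of_integral_eq_zero (c := dist x x₀ ^ (α - n)) ha
    ((continuous_const.dist continuous_id).measurable.pow_const _).aestronglyMeasurable h0 hsupp
    fun y hy => ?_
  have hkernel := abs_dist_rpow_sub_dist_rpow_le (s := α - n) (by linarith) hy hx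
  rwa [abs_of_neg (sub_neg.2 hαn), neg_sub] at hkernel

theorem measure_ball_le_fracMax {n : ℕ} {α : ℝ} (μ : Measure (EuclideanSpace ℝ (Fin n)))
    (y : EuclideanSpace ℝ (Fin n)) {r : ℝ} (hr : 0 < r) :
    μ (ball y r) ≤ fracMax n α μ y * volume (ball (0 : EuclideanSpace ℝ (Fin n)) 1) *
      ENNReal.ofReal (r ^ ((n : ℝ) - α)) := by
  have hsup : ENNReal.ofReal (r ^ α) * μ (ball y r) / volume (ball y r) ≤ fracMax n α μ y :=
    le_iSup₂ (f := fun (r : ℝ) (_ : 0 < r) =>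
      ENNReal.ofReal (r ^ α) * μ (ball y r) / volume (ball y r)) r hr
  rw [ENNReal.div_le_iff (measure_ball_pos volume y hr).ne' measure_ball_lt_top.ne,
    Measure.addHaar_ball_of_pos volume y hr, finrank_euclideanSpace_fin, ← Real.rpow_natCast,
    show (n : ℝ) = α + (n - α) by ring, Real.rpow_add hr,
    ENNReal.ofReal_mul (by positivity)] at hsup
  refine (ENNReal.mul_le_mul_iff_right (ENNReal.ofReal_pos.2 (by positivity)).ne'
    ENNReal.ofReal_ne_top).1 (hsup.trans_eq ?_)
  ring

theorem exists_ofReal_mul_setLIntegral_compl_ball_le_fracMax {n : ℕ} {α : ℝ} (hαn : α < n) :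
    ∃ C : ℝ≥0∞, 0 < C ∧ C ≠ ⊤ ∧ ∀ (μ : Measure (EuclideanSpace ℝ (Fin n)))
      (x₀ y : EuclideanSpace ℝ (Fin n)) (R : ℝ), dist y x₀ < R →
      ENNReal.ofReal R * ∫⁻ x in (ball x₀ (3 * R))ᶜ, ENNReal.ofReal (dist x x₀ ^ (α - n - 1)) ∂μ ≤
        C * fracMax n α μ y := by
  set q : ℝ := n - α
  set V := volume (ball (0 : EuclideanSpace ℝ (Fin n)) 1)
  have hV : 0 < V := measure_ball_pos volume _ one_pos
  refine ⟨ENNReal.ofReal (2 ^ q / 3) * 2 * ENNReal.ofReal ((4 / 3) ^ q) * V, ?_, ?_, ?_⟩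
  · have h2q : (0 : ℝ) < 2 ^ q / 3 := by positivity
    have h43q : (0 : ℝ) < (4 / 3) ^ q := by positivity
    simp only [ENNReal.mul_pos_iff, ENNReal.ofReal_pos]
    exact ⟨⟨⟨h2q, two_pos⟩, h43q⟩, hV⟩
  · exact ENNReal.mul_ne_top (ENNReal.mul_ne_top (ENNReal.mul_ne_top ENNReal.ofReal_ne_top
      ENNReal.ofNat_ne_top) ENNReal.ofReal_ne_top) measure_ball_lt_top.ne
  intro μ x₀ y R hy
  have hR : 0 < R := dist_nonneg.trans_lt hy
  have hgrowth : ∀ r, 3 * R ≤ r → μ (ball x₀ r) ≤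
      fracMax n α μ y * V * ENNReal.ofReal ((4 / 3) ^ q) * ENNReal.ofReal (r ^ q) := by
    intro r hr
    calc μ (ball x₀ r) ≤ μ (ball y (4 / 3 * r)) :=
          measure_mono (ball_subset_ball' (by rw [dist_comm]; linarith))
      _ ≤ fracMax n α μ y * V * ENNReal.ofReal ((4 / 3 * r) ^ q) :=
          measure_ball_le_fracMax μ y (by linarith)
      _ = _ := by
          rw [Real.mul_rpow (by norm_num) (by linarith), ENNReal.ofReal_mul (by positivity)]
          ring
  have htail := setLIntegral_compl_ball_rpow_le μ x₀ (p := α - n - 1) (by positivity)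
    (by linarith) hgrowth
  rw [show α - n - 1 + q = -1 by ring, Real.rpow_neg_one, Real.rpow_neg_one,
    ENNReal.ofReal_inv_of_pos two_pos, ENNReal.ofReal_ofNat, ENNReal.one_sub_inv_two,
    inv_inv] at htail
  calc ENNReal.ofReal R * ∫⁻ x in (ball x₀ (3 * R))ᶜ, ENNReal.ofReal (dist x x₀ ^ (α - n - 1)) ∂μ
      ≤ ENNReal.ofReal R * (ENNReal.ofReal (2 ^ q * (3 * R)⁻¹) * 2 *
          (fracMax n α μ y * V * ENNReal.ofReal ((4 / 3) ^ q))) := by gcongr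
    _ = ENNReal.ofReal (R * (2 ^ q * (3 * R)⁻¹)) * 2 * ENNReal.ofReal ((4 / 3) ^ q) * V *
          fracMax n α μ y := by rw [ENNReal.ofReal_mul hR.le]; ring
    _ = _ := by congr 5; field_simp

/-- Global (far-field) estimate for the Riesz potential of an atom: if `a` is bounded,
supported in `B = B_R(x₀)`, and has vanishing integral, and `M_α μ` is bounded, then
`∫_{(3B)ᶜ} |I_α a| dμ ≤ C ∫_B |a| M_α μ dy`. -/
theorem rieszPot_atom_global_estimate (n : ℕ) (α : ℝ) (hα : 0 < α) (hαn : α < n) :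
    ∃ C : ℝ≥0∞, 0 < C ∧ C ≠ ⊤ ∧
      ∀ (μ : Measure (EuclideanSpace ℝ (Fin n))) (A : ℝ),
        (∀ x, fracMax n α μ x ≤ ENNReal.ofReal A) →
        ∀ (x₀ : EuclideanSpace ℝ (Fin n)) (R : ℝ), 0 < R →
        ∀ a : EuclideanSpace ℝ (Fin n) → ℝ, Measurable a →
          (∃ M : ℝ, ∀ x, |a x| ≤ M) →
          (∀ x ∉ Metric.ball x₀ R, a x = 0) →
          (∫ y, a y) = 0 →
          ∫⁻ x in (Metric.ball x₀ (3 * R))ᶜ, ENNReal.ofReal |rieszPot n α a x| ∂μ ≤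
            C * ∫⁻ y in Metric.ball x₀ R, (‖a y‖₊ : ℝ≥0∞) * fracMax n α μ y := by
  obtain ⟨C, hC0, hCtop, htail⟩ := exists_ofReal_mul_setLIntegral_compl_ball_le_fracMax hαn
  set c : ℝ := |rieszGamma n α|⁻¹ * ((n - α) * (2 / 3) ^ (α - n - 1))
  have hc : 0 < c := by
    have := rieszGamma_pos hα hαn
    have : (0 : ℝ) < n - α := sub_pos.2 hαn
    positivity
  refine ⟨ENNReal.ofReal c * C, ENNReal.mul_pos (ENNReal.ofReal_pos.2 hc).ne' hC0.ne',
    ENNReal.mul_ne_top ENNReal.ofReal_ne_top hCtop, ?_⟩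
  intro μ _ _ x₀ R _ a ha ⟨M, hM⟩ hsupp h0
  have hint : Integrable a :=
    integrable_of_abs_le_of_forall_notMem_eq_zero measure_ball_lt_top.ne ha.aestronglyMeasurable
      hM hsupp
  calc ∫⁻ x in (ball x₀ (3 * R))ᶜ, ENNReal.ofReal |rieszPot n α a x| ∂μ
      ≤ ∫⁻ x in (ball x₀ (3 * R))ᶜ, ENNReal.ofReal (c * (∫ y, |a y|) * R) *
          ENNReal.ofReal (dist x x₀ ^ (α - n - 1)) ∂μ := by
        refine setLIntegral_mono (by fun_prop) fun x hx => ?_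
        rw [← ENNReal.ofReal_mul (by positivity)]
        refine ENNReal.ofReal_le_ofReal ((abs_rieszPot_le hαn hint hsupp h0 ?_).trans_eq (by ring))
        simpa using hx
    _ = ENNReal.ofReal c * ((∫⁻ y in ball x₀ R, (‖a y‖₊ : ℝ≥0∞)) * (ENNReal.ofReal R *
          ∫⁻ x in (ball x₀ (3 * R))ᶜ, ENNReal.ofReal (dist x x₀ ^ (α - n - 1)) ∂μ)) := by
        rw [lintegral_const_mul' _ _ ENNReal.ofReal_ne_top, ENNReal.ofReal_mul (by positivity),
          ENNReal.ofReal_mul hc.le, ofReal_integral_abs_eq_setLIntegral hint hsupp]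
        ring
    _ ≤ ENNReal.ofReal c * (C * ∫⁻ y in ball x₀ R, (‖a y‖₊ : ℝ≥0∞) * fracMax n α μ y) := by
        gcongr ENNReal.ofReal c * ?_
        exact setLIntegral_mul_le_const_mul_setLIntegral measurableSet_ball
          ha.nnnorm.coe_nnreal_ennreal.aemeasurable hCtop fun y hy => htail μ x₀ y R hy
    _ = _ := (mul_assoc _ _ _).symm
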